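/- arXiv:2006.12834 — 2 statements merged into one kernel-verified Lean document; each statement's English description precedes it below -/
import Mathlib

section
/- Let d, k, m be natural numbers with 1 ≤ k < m. Then the sum over i = 0, …, k−1 of 1/((k−i)(m−i)) satisfies the strict upper bound ∑_{i=0}^{k−1} 1/((k−i)(m−i)) < (ln k + 2)/(m − k). Consequently, for any natural number d with k < d, one has (d−k)·k·∑_{i=0}^{k−1} 1/((k−i)(m−i)) < (d−k)·k·(ln k + 2)/(m − k). -/
/-- Upper-bound part of Proposition 1: for `1 ≤ k < m`,
`∑_{i=0}^{k-1} 1/((k-i)(m-i)) < (ln k + 2)/(m-k)`, and consequently for any `d > k`,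
`(d-k)·k·∑ < (d-k)·k·(ln k + 2)/(m-k)`. -/
theorem l0RS_sum_upper_bound (k m : ℕ) (hk : 1 ≤ k) (hkm : k < m) :
    (∑ i ∈ Finset.range k, 1 / (((k : ℝ) - i) * ((m : ℝ) - i)))
      < (Real.log k + 2) / ((m : ℝ) - k) ∧
    ∀ d : ℕ, k < d →
      ((d : ℝ) - k) * k * (∑ i ∈ Finset.range k, 1 / (((k : ℝ) - i) * ((m : ℝ) - i)))
        < ((d : ℝ) - k) * k * (Real.log k + 2) / ((m : ℝ) - k) := by
  have hmk : (0:ℝ) < (m:ℝ) - k := by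
    have : (k:ℝ) < m := by exact_mod_cast hkm
    linarith
  have hH : (∑ i ∈ Finset.range k, 1 / ((k : ℝ) - i)) = (harmonic k : ℝ) := by
    rw [← Finset.sum_range_reflect]
    unfold harmonic
    push_cast
    refine Finset.sum_congr rfl fun i hi => ?_
    rw [Finset.mem_range] at hi
    have h1 : i + 1 ≤ k := hi
    have : ((k - 1 - i : ℕ) : ℝ) = (k:ℝ) - 1 - i := by
      have : k - 1 - i = k - (1 + i) := by omega
      rw [this, Nat.cast_sub (by omega)]
      push_cast; ring
    rw [this, one_div]
    ring_nf
  have key : (∑ i ∈ Finset.range k, 1 / (((k : ℝ) - i) * ((m : ℝ) - i)))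
      < (Real.log k + 2) / ((m : ℝ) - k) := by
    calc (∑ i ∈ Finset.range k, 1 / (((k : ℝ) - i) * ((m : ℝ) - i)))
        < ∑ i ∈ Finset.range k, (1 / ((k : ℝ) - i)) * (1 / ((m : ℝ) - k)) := by
          apply Finset.sum_lt_sum_of_nonempty
          · exact Finset.nonempty_range_iff.mpr (by omega)
          · intro i hi
            rw [Finset.mem_range] at hi
            have hki : (0:ℝ) < (k:ℝ) - i := by
              have : (i:ℝ) < k := by exact_mod_cast hi
              linarith
            have hmi : (m:ℝ) - k < (m:ℝ) - i := by
              have : (i:ℝ) < k := by exact_mod_cast hi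
              linarith
            rw [div_mul_div_comm, one_mul]
            apply one_div_lt_one_div_of_lt (by positivity)
            exact mul_lt_mul_of_pos_left hmi hki
      _ = (∑ i ∈ Finset.range k, 1 / ((k : ℝ) - i)) / ((m:ℝ) - k) := by
          rw [Finset.sum_div]
          exact Finset.sum_congr rfl fun i _ => by ring
      _ = (harmonic k : ℝ) / ((m:ℝ) - k) := by rw [hH]
      _ ≤ (1 + Real.log k) / ((m:ℝ) - k) := by
          gcongr
          exact harmonic_le_one_add_log k
      _ < (Real.log k + 2) / ((m:ℝ) - k) := by
          exact (div_lt_div_iff_of_pos_right hmk).mpr (by linarith)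
  refine ⟨key, fun d hd => ?_⟩
  have hc : (0:ℝ) < ((d:ℝ) - k) * k := by
    have h1 : (k:ℝ) < d := by exact_mod_cast hd
    have h2 : (0:ℝ) < k := by exact_mod_cast hk
    nlinarith
  calc ((d : ℝ) - k) * k * (∑ i ∈ Finset.range k, 1 / (((k : ℝ) - i) * ((m : ℝ) - i)))
      < ((d : ℝ) - k) * k * ((Real.log k + 2) / ((m : ℝ) - k)) :=
        mul_lt_mul_of_pos_left key hc
    _ = ((d : ℝ) - k) * k * (Real.log k + 2) / ((m : ℝ) - k) := by ring
end

section
/- Let d ≥ 1 and k ≤ d be natural numbers, let x ∈ ℝ^d with x_i ∈ {0,1} for every coordinate i, let w ∈ ℝ^d, let y ∈ {−1, 1}, and define ŵ ∈ ℝ^d by ŵ_i = y·w_i·(1 − 2x_i). Consider the feasible set D of perturbations δ ∈ ℝ^d such that x_i + δ_i ∈ {0,1} for all i and δ has at most k nonzero coordinates, and the set E of vectors ε ∈ ℝ^d with ε_i ∈ {0,1} for all i and at most k nonzero coordinates. Then the map δ ↦ ε with ε_i = δ_i·(1 − 2x_i) is a bijection from D onto E which for every δ ∈ D satisfies y·⟨w,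 x + δ⟩ = y·⟨w, x⟩ + ⟨ŵ, ε⟩; consequently min_{δ ∈ D} y·⟨w, x + δ⟩ = y·⟨w, x⟩ + min_{ε ∈ E} ⟨ŵ, ε⟩ (both minima exist since D and E are finite nonempty sets). -/
/-! Flipping the sign of the coordinates where `x i = 1` turns a perturbation `δ` keeping
`x + δ` binary into a binary vector `ε` with the same support, and back again, since
`(1 - 2 x_i)² = 1`. Under this involution the objective `y⟨w, x + δ⟩` becomes
`y⟨w, x⟩ + ⟨ŵ, ε⟩`, so the two finite minimisation problems differ by a constant. -/

open Set

section SignFlip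

variable {ι : Type*}

def signFlip (x δ : ι → ℝ) : ι → ℝ := fun i => δ i * (1 - 2 * x i)

def binaryL0Ball (ι : Type*) (k : ℕ) : Set (ι → ℝ) :=
  {ε | (∀ i, ε i = 0 ∨ ε i = 1) ∧ {i | ε i ≠ 0}.ncard ≤ k}

def feasiblePerturbations (x : ι → ℝ) (k : ℕ) : Set (ι → ℝ) :=
  {δ | (∀ i, x i + δ i = 0 ∨ x i + δ i = 1) ∧ {i | δ i ≠ 0}.ncard ≤ k}

variable {x : ι → ℝ}

lemma one_sub_two_mul_self_of_binary {a : ℝ} (ha : a = 0 ∨ a = 1) :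
    (1 - 2 * a) * (1 - 2 * a) = 1 := by
  rcases ha with rfl | rfl <;> norm_num

lemma add_binary_iff_mul_one_sub_two_mul_binary {a t : ℝ} (ha : a = 0 ∨ a = 1) :
    (a + t = 0 ∨ a + t = 1) ↔ (t * (1 - 2 * a) = 0 ∨ t * (1 - 2 * a) = 1) := by
  rcases ha with rfl | rfl
  · norm_num
  · constructor <;> rintro (h | h) <;> [right; left; right; left] <;> linarith

lemma signFlip_signFlip (hx : ∀ i, x i = 0 ∨ x i = 1) (δ : ι → ℝ) :
    signFlip x (signFlip x δ) = δ := by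
  funext i
  simp only [signFlip, mul_assoc, one_sub_two_mul_self_of_binary (hx i), mul_one]

lemma setOf_signFlip_ne_zero (hx : ∀ i, x i = 0 ∨ x i = 1) (δ : ι → ℝ) :
    {i | signFlip x δ i ≠ 0} = {i | δ i ≠ 0} := by
  ext i
  have hsign : 1 - 2 * x i ≠ 0 :=
    left_ne_zero_of_mul_eq_one (one_sub_two_mul_self_of_binary (hx i))
  simp [signFlip, hsign]

lemma signFlip_mem_binaryL0Ball_iff (hx : ∀ i, x i = 0 ∨ x i = 1) (k : ℕ) (δ : ι → ℝ) :
    signFlip x δ ∈ binaryL0Ball ι k ↔ δ ∈ feasiblePerturbations x k := by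
  simp only [binaryL0Ball, feasiblePerturbations, mem_ofPred_eq, setOf_signFlip_ne_zero hx]
  simp only [signFlip, add_binary_iff_mul_one_sub_two_mul_binary (hx _)]

lemma bijOn_signFlip (hx : ∀ i, x i = 0 ∨ x i = 1) (k : ℕ) :
    BijOn (signFlip x) (feasiblePerturbations x k) (binaryL0Ball ι k) := by
  have hinv : InvOn (signFlip x) (signFlip x) (feasiblePerturbations x k) (binaryL0Ball ι k) :=
    ⟨fun δ _ => signFlip_signFlip hx δ, fun ε _ => signFlip_signFlip hx ε⟩
  refine hinv.bijOn (fun δ hδ => (signFlip_mem_binaryL0Ball_iff hx k δ).2 hδ) fun ε hε => ?_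
  rwa [← signFlip_mem_binaryL0Ball_iff hx, signFlip_signFlip hx]

lemma zero_mem_binaryL0Ball (k : ℕ) : (0 : ι → ℝ) ∈ binaryL0Ball ι k := by
  simp [binaryL0Ball]

lemma zero_mem_feasiblePerturbations (hx : ∀ i, x i = 0 ∨ x i = 1) (k : ℕ) :
    (0 : ι → ℝ) ∈ feasiblePerturbations x k := by
  simpa [feasiblePerturbations] using hx

lemma binaryL0Ball_finite [Finite ι] (k : ℕ) : (binaryL0Ball ι k).Finite :=
  (Finite.pi fun _ => (finite_singleton 1).insert 0).subset fun _ hε i _ => hε.1 i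

lemma mul_sum_add_eq_add_sum_signFlip [Fintype ι] (hx : ∀ i, x i = 0 ∨ x i = 1)
    (y : ℝ) (w δ : ι → ℝ) :
    y * ∑ i, w i * (x i + δ i)
      = y * ∑ i, w i * x i + ∑ i, y * w i * (1 - 2 * x i) * signFlip x δ i := by
  simp only [Finset.mul_sum, ← Finset.sum_add_distrib, signFlip]
  refine Finset.sum_congr rfl fun i _ => ?_
  linear_combination -(y * w i * δ i) * one_sub_two_mul_self_of_binary (hx i)

end SignFlip

lemma csInf_image_eq_add_of_bijOn {α β : Type*} {s : Set α} {t : Set β} {Φ : α → β}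
    {f : α → ℝ} {g : β → ℝ} {c : ℝ} (hΦ : BijOn Φ s t)
    (hfg : ∀ a ∈ s, f a = c + g (Φ a)) (ht : t.Finite) (ht' : t.Nonempty) :
    sInf (f '' s) = c + sInf (g '' t) := by
  have himage : f '' s = (c + ·) '' (g '' t) := by
    rw [image_image, ← hΦ.image_eq, image_image]
    exact image_congr hfg
  have hleast := (ht.image g).isCompact.isLeast_sInf (ht'.image g)
  rw [himage]
  exact ((monotone_id.const_add c).map_isLeast hleast).csInf_eq

theorem l0_attack_linear_reduction_general (d k : ℕ)
    (x w : Fin d → ℝ) (hx : ∀ i, x i = 0 ∨ x i = 1) (y : ℝ)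
    (wh : Fin d → ℝ) (hwh : ∀ i, wh i = y * w i * (1 - 2 * x i))
    (D : Set (Fin d → ℝ))
    (hD : D = {δ | (∀ i, x i + δ i = 0 ∨ x i + δ i = 1) ∧ {i | δ i ≠ 0}.ncard ≤ k})
    (E : Set (Fin d → ℝ))
    (hE : E = {ε | (∀ i, ε i = 0 ∨ ε i = 1) ∧ {i | ε i ≠ 0}.ncard ≤ k})
    (Φ : (Fin d → ℝ) → (Fin d → ℝ))
    (hΦ : ∀ δ, Φ δ = fun i => δ i * (1 - 2 * x i)) :
    Set.BijOn Φ D E ∧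
    (∀ δ ∈ D, y * ∑ i, w i * (x i + δ i)
        = y * ∑ i, w i * x i + ∑ i, wh i * Φ δ i) ∧
    (∃ a, IsLeast ((fun δ => y * ∑ i, w i * (x i + δ i)) '' D) a) ∧
    (∃ b, IsLeast ((fun ε => ∑ i, wh i * ε i) '' E) b) ∧
    sInf ((fun δ => y * ∑ i, w i * (x i + δ i)) '' D)
      = y * ∑ i, w i * x i + sInf ((fun ε => ∑ i, wh i * ε i) '' E) := by
  obtain rfl : Φ = signFlip x := funext hΦ
  obtain rfl : wh = fun i => y * w i * (1 - 2 * x i) := funext hwh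
  obtain rfl : D = feasiblePerturbations x k := hD
  obtain rfl : E = binaryL0Ball (Fin d) k := hE
  have hbij := bijOn_signFlip hx k
  have hEfin := binaryL0Ball_finite (ι := Fin d) k
  have hDfin := hbij.finite_iff_finite.2 hEfin
  have hDne : (feasiblePerturbations x k).Nonempty := ⟨0, zero_mem_feasiblePerturbations hx k⟩
  have hEne : (binaryL0Ball (Fin d) k).Nonempty := ⟨0, zero_mem_binaryL0Ball k⟩
  have hobj := mul_sum_add_eq_add_sum_signFlip hx y w
  exact ⟨hbij, fun δ _ => hobj δ,
    ⟨_, (hDfin.image _).isCompact.isLeast_sInf (hDne.image _)⟩,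
    ⟨_, (hEfin.image _).isCompact.isLeast_sInf (hEne.image _)⟩,
    csInf_image_eq_add_of_bijOn hbij (fun δ _ => hobj δ) hEfin hEne⟩

/-- Reduction of Section 5.3: for a binary input `x ∈ {0,1}^d`, label `y ∈ {-1,1}`,
linear-model gradient `w`, and `ŵ_i = y·w_i·(1 - 2x_i)`, the map `δ ↦ ε` with
`ε_i = δ_i·(1 - 2x_i)` is a bijection from the set `D` of `l0`-bounded feasible
perturbations onto the set `E` of binary vectors with at most `k` ones, it satisfies
`y·⟨w, x+δ⟩ = y·⟨w, x⟩ + ⟨ŵ, ε⟩`, the minima over `D` and `E` exist, and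
`min_{δ ∈ D} y·⟨w, x+δ⟩ = y·⟨w, x⟩ + min_{ε ∈ E} ⟨ŵ, ε⟩`. -/
theorem l0_attack_linear_reduction (d k : ℕ) (hd : 1 ≤ d) (hk : k ≤ d)
    (x w : Fin d → ℝ) (hx : ∀ i, x i = 0 ∨ x i = 1) (y : ℝ) (hy : y = -1 ∨ y = 1)
    (wh : Fin d → ℝ) (hwh : ∀ i, wh i = y * w i * (1 - 2 * x i))
    (D : Set (Fin d → ℝ))
    (hD : D = {δ | (∀ i, x i + δ i = 0 ∨ x i + δ i = 1) ∧ {i | δ i ≠ 0}.ncard ≤ k})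
    (E : Set (Fin d → ℝ))
    (hE : E = {ε | (∀ i, ε i = 0 ∨ ε i = 1) ∧ {i | ε i ≠ 0}.ncard ≤ k})
    (Φ : (Fin d → ℝ) → (Fin d → ℝ))
    (hΦ : ∀ δ, Φ δ = fun i => δ i * (1 - 2 * x i)) :
    Set.BijOn Φ D E ∧
    (∀ δ ∈ D, y * ∑ i, w i * (x i + δ i)
        = y * ∑ i, w i * x i + ∑ i, wh i * Φ δ i) ∧
    (∃ a, IsLeast ((fun δ => y * ∑ i, w i * (x i + δ i)) '' D) a) ∧
    (∃ b, IsLeast ((fun ε => ∑ i, wh i * ε i) '' E) b) ∧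
    sInf ((fun δ => y * ∑ i, w i * (x i + δ i)) '' D)
      = y * ∑ i, w i * x i + sInf ((fun ε => ∑ i, wh i * ε i) '' E) :=
  l0_attack_linear_reduction_general d k x w hx y wh hwh D hD E hE Φ hΦ
end
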